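/- arXiv:1409.8460 — 6 statements merged into one kernel-verified Lean document; each statement's English description precedes it below -/
import Mathlib

section
/- For every set of transmitting devices A ⊆ M, the sets O_i(A) ∩ M_w (one for each i ∈ A), together with the sets A ∩ M_w, T(A) ∩ M_w, S(A) ∩ M_w, and the complement M \ M_w, are pairwise disjoint and their union is all of M. -/
open Finset

variable {V : Type*} [Fintype V] [DecidableEq V]

/-- The interference set `T(A)`: devices not in `A` hearing at least two transmitters. -/
def interf (C : V → Finset V) (A : Finset V) : Finset V :=
  Finset.univ.filter fun i =>
    i ∉ A ∧ ∃ m ∈ A, ∃ n ∈ A, m ≠ n ∧ i ∈ C m ∧ i ∈ C n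

/-- The out-of-range set `S(A)`: devices heard by no transmitter. -/
def outRange (C : V → Finset V) (A : Finset V) : Finset V :=
  Finset.univ.filter fun i => ∀ j ∈ A, i ∉ C j

/-- The opportunity zone `O_i(A) = C_i \ (A ∪ T(A))`. -/
def oppZone (C : V → Finset V) (A : Finset V) (i : V) : Finset V :=
  C i \ (A ∪ interf C A)

theorem stmt0 (C : V → Finset V) (hC : ∀ i, i ∈ C i) (Mw A : Finset V) :
    (∀ i ∈ A, ∀ j ∈ A, i ≠ j →
        Disjoint (oppZone C A i ∩ Mw) (oppZone C A j ∩ Mw)) ∧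
    (∀ i ∈ A, Disjoint (oppZone C A i ∩ Mw) (A ∩ Mw)) ∧
    (∀ i ∈ A, Disjoint (oppZone C A i ∩ Mw) (interf C A ∩ Mw)) ∧
    (∀ i ∈ A, Disjoint (oppZone C A i ∩ Mw) (outRange C A ∩ Mw)) ∧
    (∀ i ∈ A, Disjoint (oppZone C A i ∩ Mw) Mwᶜ) ∧
    Disjoint (A ∩ Mw) (interf C A ∩ Mw) ∧
    Disjoint (A ∩ Mw) (outRange C A ∩ Mw) ∧
    Disjoint (A ∩ Mw) Mwᶜ ∧
    Disjoint (interf C A ∩ Mw) (outRange C A ∩ Mw) ∧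
    Disjoint (interf C A ∩ Mw) Mwᶜ ∧
    Disjoint (outRange C A ∩ Mw) Mwᶜ ∧
    (A.biUnion fun i => oppZone C A i ∩ Mw) ∪ (A ∩ Mw) ∪ (interf C A ∩ Mw) ∪
        (outRange C A ∩ Mw) ∪ Mwᶜ = Finset.univ := by
  have hmemI : ∀ x, x ∈ interf C A ↔ x ∉ A ∧ ∃ m ∈ A, ∃ n ∈ A, m ≠ n ∧ x ∈ C m ∧ x ∈ C n := by
    intro x; simp [interf]
  have hmemS : ∀ x, x ∈ outRange C A ↔ ∀ j ∈ A, x ∉ C j := by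
    intro x; simp [outRange]
  have hmemO : ∀ i x, x ∈ oppZone C A i ↔ x ∈ C i ∧ x ∉ A ∧ x ∉ interf C A := by
    intro i x; simp [oppZone, and_assoc]
  refine ⟨?_, ?_, ?_, ?_, ?_, ?_, ?_, ?_, ?_, ?_, ?_, ?_⟩
  · intro i hi j hj hij
    rw [Finset.disjoint_left]
    intro x hx hx'
    simp only [Finset.mem_inter, hmemO] at hx hx'
    exact hx.1.2.2 ((hmemI x).2 ⟨hx.1.2.1, i, hi, j, hj, hij, hx.1.1, hx'.1.1⟩)
  · intro i hi
    rw [Finset.disjoint_left]; intro x hx hx'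
    simp only [Finset.mem_inter, hmemO] at hx hx'
    exact hx.1.2.1 hx'.1
  · intro i hi
    rw [Finset.disjoint_left]; intro x hx hx'
    simp only [Finset.mem_inter, hmemO] at hx hx'
    exact hx.1.2.2 hx'.1
  · intro i hi
    rw [Finset.disjoint_left]; intro x hx hx'
    simp only [Finset.mem_inter, hmemO, hmemS] at hx hx'
    exact hx'.1 i hi hx.1.1
  · intro i hi
    rw [Finset.disjoint_left]; intro x hx hx'
    simp only [Finset.mem_inter] at hx
    exact (Finset.mem_compl.mp hx') hx.2
  · rw [Finset.disjoint_left]; intro x hx hx'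
    simp only [Finset.mem_inter, hmemI] at hx hx'
    exact hx'.1.1 hx.1
  · rw [Finset.disjoint_left]; intro x hx hx'
    simp only [Finset.mem_inter, hmemS] at hx hx'
    exact hx'.1 x hx.1 (hC x)
  · rw [Finset.disjoint_left]; intro x hx hx'
    exact (Finset.mem_compl.mp hx') (Finset.mem_inter.mp hx).2
  · rw [Finset.disjoint_left]; intro x hx hx'
    simp only [Finset.mem_inter, hmemI, hmemS] at hx hx'
    obtain ⟨⟨_, m, hm, n, hn, hmn, hcm, hcn⟩, _⟩ := hx
    exact hx'.1 m hm hcm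
  · rw [Finset.disjoint_left]; intro x hx hx'
    exact (Finset.mem_compl.mp hx') (Finset.mem_inter.mp hx).2
  · rw [Finset.disjoint_left]; intro x hx hx'
    exact (Finset.mem_compl.mp hx') (Finset.mem_inter.mp hx).2
  · ext x
    simp only [Finset.mem_union, Finset.mem_biUnion, Finset.mem_inter, Finset.mem_compl,
      Finset.mem_univ, iff_true]
    by_cases hw : x ∈ Mw
    · by_cases hA : x ∈ A
      · exact Or.inl (Or.inl (Or.inl (Or.inr ⟨hA, hw⟩)))
      · by_cases hI : x ∈ interf C A
        · exact Or.inl (Or.inl (Or.inr ⟨hI, hw⟩))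
        · by_cases hS : ∀ j ∈ A, x ∉ C j
          · exact Or.inl (Or.inr ⟨(hmemS x).2 hS, hw⟩)
          · push_neg at hS
            obtain ⟨j, hj, hxj⟩ := hS
            exact Or.inl (Or.inl (Or.inl (Or.inl ⟨j, hj, (hmemO j x).2 ⟨hxj, hA, hI⟩, hw⟩)))
    · exact Or.inr hw
end

section
/- (i) A set A ⊆ M is a clique of the cooperation graph if and only if A ∈ I. (ii) For any function y : M → [0, ∞) and vertex weights w_i = |C_i ∩ M_w| − |{i} ∩ M_w| + y_i, every A ∈ I satisfies −|A ∩ M_w| − |S(A) ∩ M_w| + Σ_{i ∈ A} y_i = −|M_w| + Σ_{i ∈ A} w_i; consequently, A* maximizes −|A ∩ M_w| − |S(A) ∩ M_w| + Σ_{i ∈ A} y_i over all A ∈ I if and only if A* is a maximum-weight clique of the cooperation graph with these vertex weights. -/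
open Finset

variable {V : Type*} [Fintype V] [DecidableEq V]

/-- `A ∈ I`: the coverage zones of distinct transmitters are disjoint. -/
def nonInterfering (C : V → Finset V) (A : Finset V) : Prop :=
  ∀ i ∈ A, ∀ j ∈ A, i ≠ j → Disjoint (C i) (C j)

/-- The cooperation graph: distinct devices are adjacent iff their coverage zones
are disjoint. -/
def coopGraph (C : V → Finset V) : SimpleGraph V :=
  SimpleGraph.fromRel fun i j => Disjoint (C i) (C j)

theorem stmt5 (C : V → Finset V) (hC : ∀ i, i ∈ C i) (Mw : Finset V)
    (y : V → ℝ) (hy : ∀ i, 0 ≤ y i) :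
    -- (i) cliques of the cooperation graph are exactly the members of `I`
    (∀ A : Finset V, (coopGraph C).IsClique ↑A ↔ nonInterfering C A) ∧
    -- (ii) the objective rewrites using the vertex weights
    (∀ A : Finset V, nonInterfering C A →
      -((A ∩ Mw).card : ℝ) - ((outRange C A ∩ Mw).card : ℝ) + ∑ i ∈ A, y i =
      -(Mw.card : ℝ) +
        ∑ i ∈ A, (((C i ∩ Mw).card : ℝ) - ((({i} : Finset V) ∩ Mw).card : ℝ) + y i)) ∧
    -- consequently, maximizers coincide with maximum-weight cliques
    (∀ Astar : Finset V,
      (nonInterfering C Astar ∧ ∀ A : Finset V, nonInterfering C A →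
          -((A ∩ Mw).card : ℝ) - ((outRange C A ∩ Mw).card : ℝ) + ∑ i ∈ A, y i ≤
          -((Astar ∩ Mw).card : ℝ) - ((outRange C Astar ∩ Mw).card : ℝ) +
            ∑ i ∈ Astar, y i)
      ↔ ((coopGraph C).IsClique ↑Astar ∧
          ∀ B : Finset V, (coopGraph C).IsClique ↑B →
            ∑ i ∈ B, (((C i ∩ Mw).card : ℝ) - ((({i} : Finset V) ∩ Mw).card : ℝ) + y i) ≤
            ∑ i ∈ Astar,
              (((C i ∩ Mw).card : ℝ) - ((({i} : Finset V) ∩ Mw).card : ℝ) + y i))) := by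
  have hclique : ∀ A : Finset V, (coopGraph C).IsClique ↑A ↔ nonInterfering C A := by
    intro A
    constructor
    · intro h i hi j hj hij
      have := h (Finset.mem_coe.mpr hi) (Finset.mem_coe.mpr hj) hij
      rw [coopGraph, SimpleGraph.fromRel_adj] at this
      rcases this.2 with h' | h'
      · exact h'
      · exact h'.symm
    · intro h a ha b hb hab
      rw [coopGraph, SimpleGraph.fromRel_adj]
      exact ⟨hab, Or.inl (h a (Finset.mem_coe.mp ha) b (Finset.mem_coe.mp hb) hab)⟩
  have key : ∀ A : Finset V, nonInterfering C A →
      -((A ∩ Mw).card : ℝ) - ((outRange C A ∩ Mw).card : ℝ) + ∑ i ∈ A, y i =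
      -(Mw.card : ℝ) +
        ∑ i ∈ A, (((C i ∩ Mw).card : ℝ) - ((({i} : Finset V) ∩ Mw).card : ℝ) + y i) := by
    intro A hA
    -- out-of-range ∩ Mw is Mw minus the union of coverage∩Mw
    have hout : outRange C A ∩ Mw = Mw \ A.biUnion (fun i => C i ∩ Mw) := by
      ext x
      simp [outRange, Finset.mem_sdiff, Finset.mem_biUnion, and_comm]
      tauto
    have hdisj : ∀ i ∈ A, ∀ j ∈ A, i ≠ j →
        Disjoint (C i ∩ Mw) (C j ∩ Mw) := by
      intro i hi j hj hij
      exact (hA i hi j hj hij).mono inter_subset_left inter_subset_left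
    have hcardU : (A.biUnion (fun i => C i ∩ Mw)).card = ∑ i ∈ A, (C i ∩ Mw).card :=
      Finset.card_biUnion hdisj
    have hsub : A.biUnion (fun i => C i ∩ Mw) ⊆ Mw := by
      intro x hx
      simp only [Finset.mem_biUnion, Finset.mem_inter] at hx
      obtain ⟨i, _, _, h⟩ := hx
      exact h
    have hcardout : ((outRange C A ∩ Mw).card : ℝ) =
        (Mw.card : ℝ) - ∑ i ∈ A, ((C i ∩ Mw).card : ℝ) := by
      rw [hout, Finset.card_sdiff_of_subset hsub, Nat.cast_sub (Finset.card_le_card hsub), hcardU,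
        Nat.cast_sum]
    have hcardA : ((A ∩ Mw).card : ℝ) = ∑ i ∈ A, ((({i} : Finset V) ∩ Mw).card : ℝ) := by
      have : A ∩ Mw = A.filter (· ∈ Mw) := by
        ext x; simp [Finset.mem_inter, Finset.mem_filter]
      rw [this, Finset.card_filter, Nat.cast_sum]
      refine Finset.sum_congr rfl fun i _ => ?_
      by_cases hi : i ∈ Mw
      · simp [hi, Finset.singleton_inter_of_mem hi]
      · simp [hi, Finset.singleton_inter_of_notMem hi]
    rw [Finset.sum_add_distrib, Finset.sum_sub_distrib, hcardout, hcardA]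
    ring
  refine ⟨hclique, key, fun Astar => ?_⟩
  constructor
  · rintro ⟨hA, hmax⟩
    refine ⟨(hclique _).mpr hA, fun B hB => ?_⟩
    have hB' := (hclique B).mp hB
    have h := hmax B hB'
    rw [key B hB', key Astar hA] at h
    linarith
  · rintro ⟨hA, hmax⟩
    have hA' := (hclique _).mp hA
    refine ⟨hA', fun B hB' => ?_⟩
    have h := hmax B ((hclique B).mpr hB')
    rw [key B hB', key Astar hA']
    linarith
end

section
/- The map 𝒵 ↦ ⋃_{Z ∈ 𝒵} Z is a bijection from the set of cliques of the full cooperation graph onto the power set P(M); in particular, for every A ⊆ M there is exactly one clique 𝒵 of the full cooperation graph with ⋃_{Z ∈ 𝒵} Z = A. -/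
/-!
Fix `A ⊆ M` and join two devices of `A` whose coverage zones meet. The connected
components of this interference graph are clusters with pairwise disjoint total coverage
zones, so they form a clique with union `A`. Conversely, let `𝒵` be a clique with union
`A` and `Z ∈ 𝒵`: the total coverage zone of `Z` is disjoint from those of the other
members, so `Z` is closed under interference, and the cluster condition makes `Z`
connected; hence `Z` is a component.
-/

open Finset

variable {V : Type*} [Fintype V] [DecidableEq V]

/-- The total coverage zone `C^T(X) = ⋃_{x ∈ X} C_x`. -/
def totCov (C : V → Finset V) (X : Finset V) : Finset V := X.biUnion C

/-- `Z ∈ 𝐙`: a cluster is a non-empty set every non-empty proper subset of which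
interferes with its complement in the cluster. -/
def IsCluster (C : V → Finset V) (Z : Finset V) : Prop :=
  Z.Nonempty ∧ ∀ z ⊆ Z, z.Nonempty → z ≠ Z →
    (totCov C z ∩ totCov C (Z \ z)).Nonempty

/-- The full cooperation graph: distinct clusters are adjacent iff their total
coverage zones are disjoint. -/
def fullCoopGraph (C : V → Finset V) : SimpleGraph {Z : Finset V // IsCluster C Z} :=
  SimpleGraph.fromRel fun Z Z' => Disjoint (totCov C Z.1) (totCov C Z'.1)

theorem SimpleGraph.Reachable.exists_adj_boundary {W : Type*} {G : SimpleGraph W} {u v : W}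
    (h : G.Reachable u v) {S : Set W} (hu : u ∈ S) (hv : v ∉ S) :
    ∃ x ∈ S, ∃ y ∉ S, G.Adj x y := by
  obtain ⟨p⟩ := h
  obtain ⟨d, -, hx, hy⟩ := p.exists_boundary_dart S hu hv
  exact ⟨d.fst, hx, d.snd, hy, d.adj⟩

theorem SimpleGraph.Reachable.mem_of_adj_closed {W : Type*} {G : SimpleGraph W} {u v : W}
    (h : G.Reachable u v) {S : Set W} (hS : ∀ x ∈ S, ∀ y, G.Adj x y → y ∈ S)
    (hu : u ∈ S) : v ∈ S := by
  by_contra hv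
  obtain ⟨x, hx, y, hy, hxy⟩ := h.exists_adj_boundary hu hv
  exact hy (hS x hx y hxy)

section InterferenceGraph

omit [Fintype V] [DecidableEq V]

variable (C : V → Finset V) (A : Finset V)

def interferenceGraph : SimpleGraph V where
  Adj i j := i ≠ j ∧ i ∈ A ∧ j ∈ A ∧ ¬Disjoint (C i) (C j)
  symm := ⟨fun _ _ h => ⟨h.1.symm, h.2.2.1, h.2.1, fun hd => h.2.2.2 hd.symm⟩⟩
  loopless := ⟨fun _ h => h.1 rfl⟩

variable {C A}

theorem reachable_interferenceGraph_of_not_disjoint {i j : V} (hi : i ∈ A) (hj : j ∈ A)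
    (h : ¬Disjoint (C i) (C j)) : (interferenceGraph C A).Reachable i j := by
  by_cases hij : i = j
  · exact hij ▸ .rfl
  · exact SimpleGraph.Adj.reachable ⟨hij, hi, hj, h⟩

variable (C A) in
noncomputable def interferenceComponent (i : V) : Finset V :=
  haveI := Classical.decPred ((interferenceGraph C A).Reachable i)
  A.filter ((interferenceGraph C A).Reachable i)

theorem mem_interferenceComponent {i j : V} :
    j ∈ interferenceComponent C A i ↔ j ∈ A ∧ (interferenceGraph C A).Reachable i j := by
  classical
  simp [interferenceComponent]

theorem interferenceComponent_eq {i j : V} (h : (interferenceGraph C A).Reachable i j) :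
    interferenceComponent C A i = interferenceComponent C A j := by
  ext k
  simp only [mem_interferenceComponent]
  exact and_congr_right fun _ => ⟨h.symm.trans, h.trans⟩

end InterferenceGraph

section Clusters

omit [Fintype V]

variable {C : V → Finset V} {A : Finset V}

theorem disjoint_totCov_iff {X Y : Finset V} :
    Disjoint (totCov C X) (totCov C Y) ↔ ∀ x ∈ X, ∀ y ∈ Y, Disjoint (C x) (C y) := by
  simp only [totCov, disjoint_biUnion_left, disjoint_biUnion_right]
  exact forall₂_comm

theorem totCov_inter_nonempty {X Y : Finset V} {x y : V} (hx : x ∈ X) (hy : y ∈ Y)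
    (h : ¬Disjoint (C x) (C y)) : (totCov C X ∩ totCov C Y).Nonempty := by
  rw [← not_disjoint_iff_nonempty_inter, disjoint_totCov_iff]
  exact fun hXY => h (hXY x hx y hy)

theorem IsCluster.exists_not_disjoint {Z z : Finset V} (hZ : IsCluster C Z) (hz : z ⊆ Z)
    (hne : z.Nonempty) (hzZ : z ≠ Z) : ∃ x ∈ z, ∃ y ∈ Z \ z, ¬Disjoint (C x) (C y) := by
  have := hZ.2 z hz hne hzZ
  rw [← not_disjoint_iff_nonempty_inter, disjoint_totCov_iff] at this
  push Not at this
  exact this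

theorem isCluster_interferenceComponent {i : V} (hi : i ∈ A) :
    IsCluster C (interferenceComponent C A i) := by
  refine ⟨⟨i, mem_interferenceComponent.2 ⟨hi, .rfl⟩⟩, fun z hz ⟨a, ha⟩ hzZ => ?_⟩
  obtain ⟨b, hb, hbz⟩ := exists_of_ssubset (hz.ssubset_of_ne hzZ)
  have hia := (mem_interferenceComponent.1 (hz ha)).2
  have hib := (mem_interferenceComponent.1 hb).2
  obtain ⟨x, hx, y, hyz, hxy⟩ := (hia.symm.trans hib).exists_adj_boundary (S := ↑z) ha hbz
  have hy : y ∈ interferenceComponent C A i :=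
    mem_interferenceComponent.2
      ⟨hxy.2.2.1, (mem_interferenceComponent.1 (hz hx)).2.trans hxy.reachable⟩
  exact totCov_inter_nonempty hx (mem_sdiff.2 ⟨hy, hyz⟩) hxy.2.2.2

theorem disjoint_totCov_interferenceComponent {i j : V}
    (h : interferenceComponent C A i ≠ interferenceComponent C A j) :
    Disjoint (totCov C (interferenceComponent C A i)) (totCov C (interferenceComponent C A j)) := by
  rw [disjoint_totCov_iff]
  intro x hx y hy
  by_contra hxy
  obtain ⟨hxA, hix⟩ := mem_interferenceComponent.1 hx
  obtain ⟨hyA, hjy⟩ := mem_interferenceComponent.1 hy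
  exact h (interferenceComponent_eq
    (hix.trans ((reachable_interferenceGraph_of_not_disjoint hxA hyA hxy).trans hjy.symm)))

theorem IsCluster.subset_interferenceComponent {Z : Finset V} {i : V} (hZ : IsCluster C Z)
    (hZA : Z ⊆ A) (hi : i ∈ Z) : Z ⊆ interferenceComponent C A i := by
  by_contra hsub
  obtain ⟨x, hx, y, hy, hxy⟩ := hZ.exists_not_disjoint (z := Z ∩ interferenceComponent C A i)
    inter_subset_left ⟨i, mem_inter.2 ⟨hi, mem_interferenceComponent.2 ⟨hZA hi, .rfl⟩⟩⟩
    fun h => hsub (h ▸ inter_subset_right)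
  obtain ⟨hyZ, hyz⟩ := mem_sdiff.1 hy
  obtain ⟨hxZ, hix⟩ := mem_inter.1 hx
  have hiy := (mem_interferenceComponent.1 hix).2.trans
    (reachable_interferenceGraph_of_not_disjoint (hZA hxZ) (hZA hyZ) hxy)
  exact hyz (mem_inter.2 ⟨hyZ, mem_interferenceComponent.2 ⟨hZA hyZ, hiy⟩⟩)

theorem fullCoopGraph_adj {Z Z' : {Z : Finset V // IsCluster C Z}} :
    (fullCoopGraph C).Adj Z Z' ↔ Z ≠ Z' ∧ Disjoint (totCov C Z.1) (totCov C Z'.1) := by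
  simp only [fullCoopGraph, SimpleGraph.fromRel_adj, disjoint_comm (a := totCov C Z'.1), or_self]

variable (C A) in
noncomputable def interferenceComponents : Finset {Z : Finset V // IsCluster C Z} :=
  -- every component is a cluster, so `subtype` discards nothing
  haveI := Classical.decPred (IsCluster C)
  (A.image (interferenceComponent C A)).subtype (IsCluster C)

theorem mem_interferenceComponents {Z : {Z : Finset V // IsCluster C Z}} :
    Z ∈ interferenceComponents C A ↔ ∃ i ∈ A, interferenceComponent C A i = Z.1 := by
  simp only [interferenceComponents, mem_subtype, mem_image]

theorem biUnion_interferenceComponents :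
    (interferenceComponents C A).biUnion Subtype.val = A := by
  ext x
  simp only [mem_biUnion, mem_interferenceComponents]
  constructor
  · rintro ⟨Z, ⟨i, -, hi⟩, hx⟩
    exact (mem_interferenceComponent.1 (hi ▸ hx)).1
  · exact fun hx => ⟨⟨_, isCluster_interferenceComponent hx⟩, ⟨x, hx, rfl⟩,
      mem_interferenceComponent.2 ⟨hx, .rfl⟩⟩

theorem isClique_interferenceComponents :
    (fullCoopGraph C).IsClique ↑(interferenceComponents C A) := by
  rintro Z hZ Z' hZ' hne
  obtain ⟨i, -, hi⟩ := mem_interferenceComponents.1 hZ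
  obtain ⟨j, -, hj⟩ := mem_interferenceComponents.1 hZ'
  refine fullCoopGraph_adj.2 ⟨hne, ?_⟩
  rw [← hi, ← hj]
  exact disjoint_totCov_interferenceComponent fun h => hne (Subtype.ext (hi ▸ hj ▸ h))

section Cliques

variable {𝒵 : Finset {Z : Finset V // IsCluster C Z}} (hcl : (fullCoopGraph C).IsClique ↑𝒵)
  (hU : 𝒵.biUnion Subtype.val = A)
include hcl hU

theorem mem_of_mem_clique_of_adj {Z : {Z : Finset V // IsCluster C Z}} (hZ : Z ∈ 𝒵) {x y : V}
    (hx : x ∈ Z.1) (hxy : (interferenceGraph C A).Adj x y) : y ∈ Z.1 := by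
  obtain ⟨Z', hZ', hyZ'⟩ := mem_biUnion.1 (hU ▸ hxy.2.2.1)
  by_contra hyZ
  have hdisj := (fullCoopGraph_adj.1 (hcl hZ hZ' fun h => hyZ (h ▸ hyZ'))).2
  exact hxy.2.2.2 (disjoint_totCov_iff.1 hdisj x hx y hyZ')

theorem eq_interferenceComponent_of_mem_clique {Z : {Z : Finset V // IsCluster C Z}}
    (hZ : Z ∈ 𝒵) {i : V} (hi : i ∈ Z.1) : Z.1 = interferenceComponent C A i := by
  have hZA : Z.1 ⊆ A := fun x hx => hU ▸ mem_biUnion.2 ⟨Z, hZ, hx⟩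
  refine (Z.2.subset_interferenceComponent hZA hi).antisymm fun j hj => ?_
  exact (mem_interferenceComponent.1 hj).2.mem_of_adj_closed (S := ↑Z.1)
    (fun x hx y hxy => mem_of_mem_clique_of_adj hcl hU hZ hx hxy) hi

theorem eq_interferenceComponents_of_isClique : 𝒵 = interferenceComponents C A := by
  ext Z
  rw [mem_interferenceComponents]
  constructor
  · intro hZ
    obtain ⟨i, hi⟩ := Z.2.1
    exact ⟨i, hU ▸ mem_biUnion.2 ⟨Z, hZ, hi⟩,
      (eq_interferenceComponent_of_mem_clique hcl hU hZ hi).symm⟩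
  · rintro ⟨i, hi, hZ⟩
    obtain ⟨Z', hZ', hiZ'⟩ := mem_biUnion.1 (hU ▸ hi)
    have hZ'Z : Z' = Z :=
      Subtype.ext ((eq_interferenceComponent_of_mem_clique hcl hU hZ' hiZ').trans hZ)
    exact hZ'Z ▸ hZ'

end Cliques

end Clusters

theorem stmt9_general (C : V → Finset V) :
    -- the union map is a bijection from the cliques of the full cooperation graph
    -- onto the power set of the device set
    Set.BijOn (fun Zc : Finset {Z : Finset V // IsCluster C Z} => Zc.biUnion Subtype.val)
      {Zc | (fullCoopGraph C).IsClique ↑Zc} Set.univ ∧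
    -- in particular every `A` is the union of exactly one clique
    (∀ A : Finset V, ∃! Zc : Finset {Z : Finset V // IsCluster C Z},
      (fullCoopGraph C).IsClique ↑Zc ∧ Zc.biUnion Subtype.val = A) := by
  have unique_clique (A : Finset V) : ∃! Zc : Finset {Z : Finset V // IsCluster C Z},
      (fullCoopGraph C).IsClique ↑Zc ∧ Zc.biUnion Subtype.val = A :=
    ⟨interferenceComponents C A,
      ⟨isClique_interferenceComponents, biUnion_interferenceComponents⟩,
      fun _ h => eq_interferenceComponents_of_isClique h.1 h.2⟩
  have injOn : Set.InjOn (fun Zc : Finset {Z : Finset V // IsCluster C Z} =>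
      Zc.biUnion Subtype.val) {Zc | (fullCoopGraph C).IsClique ↑Zc} :=
    fun X hX Y hY hXY => (unique_clique _).unique ⟨hX, rfl⟩ ⟨hY, hXY.symm⟩
  exact ⟨⟨fun _ _ => Set.mem_univ _, injOn, fun A _ => (unique_clique A).exists⟩,
    unique_clique⟩

theorem stmt9 (C : V → Finset V) (hC : ∀ i, i ∈ C i) :
    -- the union map is a bijection from the cliques of the full cooperation graph
    -- onto the power set of the device set
    Set.BijOn (fun Zc : Finset {Z : Finset V // IsCluster C Z} => Zc.biUnion Subtype.val)
      {Zc | (fullCoopGraph C).IsClique ↑Zc} Set.univ ∧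
    -- in particular every `A` is the union of exactly one clique
    (∀ A : Finset V, ∃! Zc : Finset {Z : Finset V // IsCluster C Z},
      (fullCoopGraph C).IsClique ↑Zc ∧ Zc.biUnion Subtype.val = A) :=
  stmt9_general C
end

section
/- Let w : 𝐙 → ℝ be any vertex weight function, and let 𝒵* be a clique of the full cooperation graph maximizing Σ_{Z ∈ 𝒵} w(Z) over all cliques 𝒵. Then for every Z ∈ 𝒵* and every non-empty proper subset Y ⊊ Z with Y ∈ 𝐙, we have w(Z) ≥ w(Y); in particular, w(Z) ≥ w({z}) for every z ∈ Z. -/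
open Finset

variable {V : Type*} [Fintype V] [DecidableEq V]

lemma totCov_nonempty (C : V → Finset V) (hC : ∀ i, i ∈ C i)
    {Z : Finset V} (hZ : Z.Nonempty) : (totCov C Z).Nonempty := by
  obtain ⟨z, hz⟩ := hZ
  exact ⟨z, Finset.mem_biUnion.2 ⟨z, hz, hC z⟩⟩

lemma totCov_mono (C : V → Finset V) {X Y : Finset V} (h : X ⊆ Y) :
    totCov C X ⊆ totCov C Y := Finset.biUnion_subset_biUnion_of_subset_left _ h

theorem stmt14 (C : V → Finset V) (hC : ∀ i, i ∈ C i)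
    (w : {Z : Finset V // IsCluster C Z} → ℝ)
    (Zstar : Finset {Z : Finset V // IsCluster C Z})
    (hclique : (fullCoopGraph C).IsClique ↑Zstar)
    (hmax : ∀ Zc : Finset {Z : Finset V // IsCluster C Z},
      (fullCoopGraph C).IsClique ↑Zc → ∑ Z ∈ Zc, w Z ≤ ∑ Z ∈ Zstar, w Z) :
    -- every cluster of the maximum-weight clique weighs at least as much as each of
    -- its proper sub-clusters ...
    (∀ Z ∈ Zstar, ∀ Y : {Z : Finset V // IsCluster C Z},
      Y.1 ⊆ Z.1 → Y.1 ≠ Z.1 → w Y ≤ w Z) ∧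
    -- ... in particular at least as much as each of its singletons
    (∀ Z ∈ Zstar, ∀ z ∈ Z.1, ∀ hz : IsCluster C {z}, w ⟨{z}, hz⟩ ≤ w Z) := by
  have main : ∀ Z ∈ Zstar, ∀ Y : {Z : Finset V // IsCluster C Z},
      Y.1 ⊆ Z.1 → Y.1 ≠ Z.1 → w Y ≤ w Z := by
    intro Z hZ Y hsub hne
    have hYne : (totCov C Y.1).Nonempty := totCov_nonempty C hC Y.2.1
    have hYZ : totCov C Y.1 ⊆ totCov C Z.1 := totCov_mono C hsub
    -- Y is not in Zstar.erase Z
    have hYnot : Y ∉ Zstar.erase Z := by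
      intro hmem
      have hYZs : Y ∈ Zstar := Finset.mem_of_mem_erase hmem
      have hne' : Y ≠ Z := Finset.ne_of_mem_erase hmem
      have hadj := hclique hYZs hZ (by exact_mod_cast hne')
      rw [fullCoopGraph, SimpleGraph.fromRel_adj] at hadj
      obtain ⟨y, hy⟩ := hYne
      rcases hadj.2 with h | h
      · exact Finset.disjoint_left.1 h hy (hYZ hy)
      · exact Finset.disjoint_left.1 h.symm hy (hYZ hy)
    -- new clique
    have hcl : (fullCoopGraph C).IsClique ↑(insert Y (Zstar.erase Z)) := by
      intro a ha b hb hab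
      simp only [Finset.coe_insert, Set.mem_insert_iff, Finset.mem_coe] at ha hb
      have key : ∀ X ∈ Zstar.erase Z, (fullCoopGraph C).Adj Y X := by
        intro X hX
        have hXs : X ∈ Zstar := Finset.mem_of_mem_erase hX
        have hXne : X ≠ Z := Finset.ne_of_mem_erase hX
        have hadj := hclique hXs hZ (by exact_mod_cast hXne)
        rw [fullCoopGraph, SimpleGraph.fromRel_adj] at hadj
        have hdis : Disjoint (totCov C Y.1) (totCov C X.1) := by
          rcases hadj.2 with h | h
          · exact Disjoint.mono_left hYZ h.symm
          · exact Disjoint.mono_left hYZ h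
        have hYX : Y ≠ X := by
          rintro rfl
          obtain ⟨y, hy⟩ := hYne
          exact Finset.disjoint_left.1 hdis hy hy
        rw [fullCoopGraph, SimpleGraph.fromRel_adj]
        exact ⟨hYX, Or.inl hdis⟩
      rcases ha with rfl | ha
      · rcases hb with rfl | hb
        · exact absurd rfl hab
        · exact key b hb
      · rcases hb with rfl | hb
        · exact (key a ha).symm
        · exact hclique (Finset.mem_of_mem_erase ha) (Finset.mem_of_mem_erase hb) hab
    have hsum := hmax _ hcl
    rw [Finset.sum_insert hYnot] at hsum
    have hsplit : ∑ X ∈ Zstar, w X = w Z + ∑ X ∈ Zstar.erase Z, w X :=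
      (Finset.add_sum_erase _ _ hZ).symm
    rw [hsplit] at hsum
    linarith
  refine ⟨main, ?_⟩
  intro Z hZ z hz hzc
  by_cases h : ({z} : Finset V) = Z.1
  · have : (⟨{z}, hzc⟩ : {Z : Finset V // IsCluster C Z}) = Z := Subtype.ext h
    rw [this]
  · exact main Z hZ ⟨{z}, hzc⟩ (Finset.singleton_subset_iff.2 hz) h
end

section
/- Let K be a clique of the local IDNC graph G_i and let κ_K = {l ∈ N : (k, l) ∈ K for some device k}. Then κ_K ⊆ H_i, and for every vertex (k, l) ∈ K one has κ_K ∩ W_k = {l}; that is, the coded packet κ_K is instantly decodable for every device appearing in K and delivers to each such device exactly its wanted packet identified by its vertex. -/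
open Finset

variable {V P : Type*} [Fintype V] [DecidableEq V] [Fintype P] [DecidableEq P]

/-- The Wants set `W_k = N \ H_k`. -/
def wants (H : V → Finset P) (k : V) : Finset P := (H k)ᶜ

/-- Vertices of the local IDNC graph of device `i` with opportunity zone `O`:
pairs `(k, l)` with `k ∈ O` and `l ∈ W_k ∩ H_i`. -/
def IdncVert (O : Finset V) (H : V → Finset P) (i : V) (v : V × P) : Prop :=
  v.1 ∈ O ∧ v.2 ∈ wants H v.1 ∧ v.2 ∈ H i

/-- The local IDNC graph `G_i`: distinct vertices `(k, l)` and `(m, n)` are adjacent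
iff `l = n`, or (`l ∈ H_m` and `n ∈ H_k`). -/
def localIDNC (O : Finset V) (H : V → Finset P) (i : V) :
    SimpleGraph {v : V × P // IdncVert O H i v} :=
  SimpleGraph.fromRel fun u w =>
    u.1.2 = w.1.2 ∨ (u.1.2 ∈ H w.1.1 ∧ w.1.2 ∈ H u.1.1)

theorem stmt17 (O : Finset V) (H : V → Finset P) (i : V) (hO : i ∉ O)
    (K : Finset {v : V × P // IdncVert O H i v})
    (hK : (localIDNC O H i).IsClique ↑K) :
    -- the coded packet `κ_K` only uses packets that device `i` holds ...
    K.image (fun v => v.1.2) ⊆ H i ∧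
    -- ... and is instantly decodable for every device appearing in `K`,
    -- delivering exactly the wanted packet identified by its vertex
    (∀ v ∈ K, (K.image (fun v => v.1.2)) ∩ wants H v.1.1 = {v.1.2}) := by
  constructor
  · intro l hl
    simp only [mem_image] at hl
    obtain ⟨v, -, rfl⟩ := hl
    exact v.2.2.2
  · intro v hv
    apply Finset.Subset.antisymm
    · intro l hl
      simp only [mem_inter, mem_image] at hl
      obtain ⟨⟨w, hw, hwl⟩, hlw⟩ := hl
      subst hwl
      by_cases hvw : v = w
      · simp [hvw]
      · have hadj := hK (by simpa using hv) (by simpa using hw) hvw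
        simp only [localIDNC, SimpleGraph.fromRel_adj] at hadj
        have h2 := hadj.2
        cases h2 with
        | inl h =>
          cases h with
          | inl h => simp [← h]
          | inr h => exact absurd h.2 (by simpa [wants] using hlw)
        | inr h =>
          cases h with
          | inl h => simp [h]
          | inr h => exact absurd h.1 (by simpa [wants] using hlw)
    · intro l hl
      simp only [mem_singleton] at hl
      subst hl
      simp only [mem_inter, mem_image]
      exact ⟨⟨v, hv, rfl⟩, v.2.2.1⟩
end

section
/- Give each vertex (k, l) of the local IDNC graph G_i the weight 1 − p_{ik}, and for κ ⊆ N let τ_i(κ) = {k ∈ O_i : |κ ∩ W_k| = 1}. Then the maximum over cliques K of G_i of Σ_{(k,l) ∈ K} (1 − p_{ik}) equals the maximum over κ ⊆ H_i of Σ_{k ∈ τ_i(κ)} (1 − p_{ik}); moreover, if K* is a maximum-weight clique of G_i, then the coded packet κ_{K*} = {l : (k, l) ∈ K* for some k} attains the maximum of Σ_{k ∈ τ_i(κ)} (1 − p_{ik}) over κ ⊆ H_i. -/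
open Finset

variable {V P : Type*} [Fintype V] [DecidableEq V] [Fintype P] [DecidableEq P]

/-- `τ_i(κ) = {k ∈ O_i : |κ ∩ W_k| = 1}`. -/
def targetedBy (O : Finset V) (H : V → Finset P) (κ : Finset P) : Finset V :=
  O.filter fun k => (κ ∩ wants H k).card = 1

instance idncDec (O : Finset V) (H : V → Finset P) (i : V) :
    DecidablePred (IdncVert O H i) := fun v => by
  unfold IdncVert; infer_instance

lemma clique_fst_inj (O : Finset V) (H : V → Finset P) (i : V)
    (K : Finset {v : V × P // IdncVert O H i v})
    (hK : (localIDNC O H i).IsClique ↑K) :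
    ∀ u ∈ K, ∀ v ∈ K, u.1.1 = v.1.1 → u = v := by
  intro u hu v hv h1
  by_contra hne
  have hadj := hK (Finset.mem_coe.mpr hu) (Finset.mem_coe.mpr hv) hne
  rw [localIDNC, SimpleGraph.fromRel_adj] at hadj
  have hw : u.1.2 ∈ wants H u.1.1 := u.2.2.1
  rw [wants, Finset.mem_compl] at hw
  rcases hadj.2 with (h2 | ⟨h2, h3⟩) | (h2 | ⟨h2, h3⟩)
  · exact hne (Subtype.ext (Prod.ext h1 h2))
  · rw [← h1] at h2; exact hw h2
  · exact hne (Subtype.ext (Prod.ext h1 h2.symm))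
  · rw [← h1] at h3; exact hw h3

lemma clique_le (O : Finset V) (H : V → Finset P) (i : V)
    (K : Finset {v : V × P // IdncVert O H i v})
    (hK : (localIDNC O H i).IsClique ↑K) (w : V → ℝ) (hw : ∀ k, 0 ≤ w k) :
    ∑ v ∈ K, w v.1.1 ≤ ∑ k ∈ targetedBy O H (K.image fun v => v.1.2), w k := by
  have hsub : K.image (fun v => v.1.1) ⊆ targetedBy O H (K.image fun v => v.1.2) := by
    intro k hk
    obtain ⟨u, hu, rfl⟩ := Finset.mem_image.mp hk
    refine Finset.mem_filter.mpr ⟨u.2.1, ?_⟩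
    have hset : (K.image fun v => v.1.2) ∩ wants H u.1.1 = {u.1.2} := by
      ext n
      simp only [Finset.mem_inter, Finset.mem_image, Finset.mem_singleton]
      constructor
      · rintro ⟨⟨v, hv, rfl⟩, hn⟩
        by_cases hvu : v = u
        · rw [hvu]
        · have hadj := hK (Finset.mem_coe.mpr hv) (Finset.mem_coe.mpr hu) hvu
          rw [localIDNC, SimpleGraph.fromRel_adj] at hadj
          rw [wants, Finset.mem_compl] at hn
          rcases hadj.2 with (h2 | ⟨h2, h3⟩) | (h2 | ⟨h2, h3⟩)
          · exact h2
          · exact absurd h2 hn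
          · exact h2.symm
          · exact absurd h3 hn
      · rintro rfl
        exact ⟨⟨u, hu, rfl⟩, u.2.2.1⟩
    rw [hset, Finset.card_singleton]
  calc ∑ v ∈ K, w v.1.1 = ∑ k ∈ K.image (fun v => v.1.1), w k :=
        (Finset.sum_image (fun u hu v hv h => clique_fst_inj O H i K hK u hu v hv h)).symm
    _ ≤ _ := Finset.sum_le_sum_of_subset_of_nonneg hsub (fun k _ _ => hw k)

lemma exists_clique (O : Finset V) (H : V → Finset P) (i : V)
    (κ : Finset P) (hκ : κ ⊆ H i) :
    ∃ K : Finset {v : V × P // IdncVert O H i v},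
      (localIDNC O H i).IsClique ↑K ∧
      ∀ w : V → ℝ, ∑ v ∈ K, w v.1.1 = ∑ k ∈ targetedBy O H κ, w k := by
  classical
  set K : Finset {v : V × P // IdncVert O H i v} :=
    Finset.univ.filter (fun v => v.1.1 ∈ targetedBy O H κ ∧ v.1.2 ∈ κ) with hKdef
  have hmem : ∀ v : {v : V × P // IdncVert O H i v},
      v ∈ K ↔ v.1.1 ∈ targetedBy O H κ ∧ v.1.2 ∈ κ := by
    intro v; simp [hKdef]
  have huniq : ∀ u ∈ K, ∀ v ∈ K, u.1.1 = v.1.1 → u = v := by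
    intro u hu v hv h1
    rw [hmem] at hu hv
    have hcard : (κ ∩ wants H u.1.1).card = 1 := (Finset.mem_filter.mp hu.1).2
    obtain ⟨l, hl⟩ := Finset.card_eq_one.mp hcard
    have h2 : u.1.2 ∈ κ ∩ wants H u.1.1 := Finset.mem_inter.mpr ⟨hu.2, u.2.2.1⟩
    have h3 : v.1.2 ∈ κ ∩ wants H u.1.1 := by
      rw [h1]; exact Finset.mem_inter.mpr ⟨hv.2, v.2.2.1⟩
    rw [hl, Finset.mem_singleton] at h2 h3
    exact Subtype.ext (Prod.ext h1 (h2.trans h3.symm))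
  refine ⟨K, ?_, ?_⟩
  · intro u hu v hv hne
    rw [Finset.mem_coe] at hu hv
    have h1 : u.1.1 ≠ v.1.1 := fun h => hne (huniq u hu v hv h)
    rw [localIDNC, SimpleGraph.fromRel_adj]
    refine ⟨hne, Or.inl ?_⟩
    by_cases h2 : u.1.2 = v.1.2
    · exact Or.inl h2
    · refine Or.inr ⟨?_, ?_⟩
      · -- u.1.2 ∈ H v.1.1
        rw [hmem] at hu hv
        have hcard : (κ ∩ wants H v.1.1).card = 1 := (Finset.mem_filter.mp hv.1).2
        obtain ⟨l, hl⟩ := Finset.card_eq_one.mp hcard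
        have h3 : v.1.2 ∈ κ ∩ wants H v.1.1 := Finset.mem_inter.mpr ⟨hv.2, v.2.2.1⟩
        rw [hl, Finset.mem_singleton] at h3
        by_contra hcon
        have : u.1.2 ∈ κ ∩ wants H v.1.1 :=
          Finset.mem_inter.mpr ⟨hu.2, by rw [wants, Finset.mem_compl]; exact hcon⟩
        rw [hl, Finset.mem_singleton] at this
        exact h2 (this.trans h3.symm ▸ (this ▸ rfl : u.1.2 = l) ▸ rfl)
      · rw [hmem] at hu hv
        have hcard : (κ ∩ wants H u.1.1).card = 1 := (Finset.mem_filter.mp hu.1).2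
        obtain ⟨l, hl⟩ := Finset.card_eq_one.mp hcard
        have h3 : u.1.2 ∈ κ ∩ wants H u.1.1 := Finset.mem_inter.mpr ⟨hu.2, u.2.2.1⟩
        rw [hl, Finset.mem_singleton] at h3
        by_contra hcon
        have h4 : v.1.2 ∈ κ ∩ wants H u.1.1 :=
          Finset.mem_inter.mpr ⟨hv.2, by rw [wants, Finset.mem_compl]; exact hcon⟩
        rw [hl, Finset.mem_singleton] at h4
        exact h2 (h3.trans h4.symm)
  · intro w
    refine Finset.sum_bij (fun v _ => v.1.1) ?_ ?_ ?_ ?_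
    · intro v hv; exact ((hmem v).mp hv).1
    · intro u hu v hv h; exact huniq u hu v hv h
    · intro k hk
      have hcard : (κ ∩ wants H k).card = 1 := (Finset.mem_filter.mp hk).2
      obtain ⟨l, hl⟩ := Finset.card_eq_one.mp hcard
      have hlmem : l ∈ κ ∩ wants H k := hl ▸ Finset.mem_singleton_self l
      have hlκ : l ∈ κ := (Finset.mem_inter.mp hlmem).1
      have hlw : l ∈ wants H k := (Finset.mem_inter.mp hlmem).2
      refine ⟨⟨(k, l), ⟨(Finset.mem_filter.mp hk).1, hlw, hκ hlκ⟩⟩, ?_, rfl⟩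
      rw [hmem]; exact ⟨hk, hlκ⟩
    · intro v hv; rfl
theorem stmt19 (O : Finset V) (H : V → Finset P) (i : V) (hO : i ∉ O)
    (p : V → V → ℝ) (hp : ∀ a b, 0 ≤ p a b ∧ p a b ≤ 1) :
    -- the maximum clique weight equals the maximum gain over coded packets ...
    sSup {x : ℝ | ∃ K : Finset {v : V × P // IdncVert O H i v},
        (localIDNC O H i).IsClique ↑K ∧ x = ∑ v ∈ K, (1 - p i v.1.1)} =
      sSup {x : ℝ | ∃ κ ⊆ H i, x = ∑ k ∈ targetedBy O H κ, (1 - p i k)} ∧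
    -- ... and the coded packet of a maximum-weight clique attains the latter maximum
    (∀ Kstar : Finset {v : V × P // IdncVert O H i v},
      (localIDNC O H i).IsClique ↑Kstar →
      (∀ K : Finset {v : V × P // IdncVert O H i v}, (localIDNC O H i).IsClique ↑K →
        ∑ v ∈ K, (1 - p i v.1.1) ≤ ∑ v ∈ Kstar, (1 - p i v.1.1)) →
      (Kstar.image (fun v => v.1.2) ⊆ H i ∧
        ∀ κ ⊆ H i,
          ∑ k ∈ targetedBy O H κ, (1 - p i k) ≤
          ∑ k ∈ targetedBy O H (Kstar.image (fun v => v.1.2)), (1 - p i k))) := by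
  have hw : ∀ k, 0 ≤ 1 - p i k := fun k => by linarith [(hp i k).2]
  have himg : ∀ K : Finset {v : V × P // IdncVert O H i v},
      K.image (fun v => v.1.2) ⊆ H i := by
    intro K l hl
    obtain ⟨v, _, rfl⟩ := Finset.mem_image.mp hl
    exact v.2.2.2
  set S1 : Set ℝ := {x : ℝ | ∃ K : Finset {v : V × P // IdncVert O H i v},
      (localIDNC O H i).IsClique ↑K ∧ x = ∑ v ∈ K, (1 - p i v.1.1)} with hS1
  set S2 : Set ℝ := {x : ℝ | ∃ κ ⊆ H i, x = ∑ k ∈ targetedBy O H κ, (1 - p i k)} with hS2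
  have hmem2 : ∀ κ : Finset P, κ ⊆ H i →
      (∑ k ∈ targetedBy O H κ, (1 - p i k)) ∈ S2 := fun κ hκ => ⟨κ, hκ, rfl⟩
  have hmem1 : ∀ K : Finset {v : V × P // IdncVert O H i v},
      (localIDNC O H i).IsClique ↑K → (∑ v ∈ K, (1 - p i v.1.1)) ∈ S1 :=
    fun K hK => ⟨K, hK, rfl⟩
  have hbdd2 : BddAbove S2 := by
    refine ⟨∑ k ∈ O, (1 - p i k), ?_⟩
    rintro x ⟨κ, hκ, rfl⟩
    exact Finset.sum_le_sum_of_subset_of_nonneg (Finset.filter_subset _ _)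
      (fun k _ _ => hw k)
  have hbdd1 : BddAbove S1 := by
    refine ⟨∑ k ∈ O, (1 - p i k), ?_⟩
    rintro x ⟨K, hK, rfl⟩
    refine le_trans (clique_le O H i K hK _ hw) ?_
    exact Finset.sum_le_sum_of_subset_of_nonneg (Finset.filter_subset _ _)
      (fun k _ _ => hw k)
  have hne1 : S1.Nonempty := ⟨0, ∅, by simp [SimpleGraph.IsClique], by simp⟩
  have hne2 : S2.Nonempty := ⟨0, ∅, Finset.empty_subset _, by simp [targetedBy]⟩
  constructor
  · apply le_antisymm
    · refine csSup_le hne1 ?_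
      rintro x ⟨K, hK, rfl⟩
      refine le_trans (clique_le O H i K hK _ hw) ?_
      exact le_csSup hbdd2 (hmem2 _ (himg K))
    · refine csSup_le hne2 ?_
      rintro x ⟨κ, hκ, rfl⟩
      obtain ⟨K, hK, hKs⟩ := exists_clique O H i κ hκ
      have := hmem1 K hK
      rw [hKs (fun k => 1 - p i k)] at this
      exact le_csSup hbdd1 this
  · intro Kstar hcl hmax
    refine ⟨himg Kstar, ?_⟩
    intro κ hκ
    obtain ⟨K, hK, hKs⟩ := exists_clique O H i κ hκ
    calc ∑ k ∈ targetedBy O H κ, (1 - p i k) = ∑ v ∈ K, (1 - p i v.1.1) :=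
          (hKs (fun k => 1 - p i k)).symm
      _ ≤ ∑ v ∈ Kstar, (1 - p i v.1.1) := hmax K hK
      _ ≤ _ := clique_le O H i Kstar hcl _ hw
end
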